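/- Let a ≠ 0 and b ∈ ℝ, and define m(n) = logit(Φ(−|a·√n + b|)) for n > 0, where Φ is the standard normal CDF and logit(x) = log(x) − log(1−x). Then there exists N such that m is differentiable on (N, ∞), and lim_{n→∞} m′(n) = −a²/2. -/

import Mathlib

open Filter MeasureTheory Set

/-- Standard normal CDF. -/
noncomputable def Phi (x : ℝ) : ℝ :=
  ∫ t in Set.Iio x, (Real.sqrt (2 * Real.pi))⁻¹ * Real.exp (-t ^ 2 / 2)

/-- Standard normal density. -/
noncomputable def stdPdf (x : ℝ) : ℝ := (Real.sqrt (2 * Real.pi))⁻¹ * Real.exp (-x ^ 2 / 2)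

/-- Standard normal quantile function. -/
noncomputable def PhiInv : ℝ → ℝ := Function.invFun Phi

/-- Logit function. -/
noncomputable def logit (x : ℝ) : ℝ := Real.log x - Real.log (1 - x)

/-!
For large `n` the quantity `g n = a √n + b` is nonzero, so `m = F ∘ |g|` with the smooth
function `F x = logit (Φ (-x))`, and the chain rule gives `m' n = (F' x / x) · g n · a / (2 √n)`
with `x = |g n| → ∞`. The last two factors tend to `a² / 2`, and
`F' x = -φ x (1 / Φ(-x) + 1 / (1 - Φ(-x))) ~ -x` by the Mills-ratio asymptotics
`Φ(-x) ~ φ(x) / x`.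
-/

open ProbabilityTheory Topology

lemma stdPdf_eq_gaussianPDFReal : stdPdf = gaussianPDFReal 0 1 := by
  ext x
  simp [stdPdf, gaussianPDFReal]

lemma stdPdf_pos (x : ℝ) : 0 < stdPdf x :=
  stdPdf_eq_gaussianPDFReal ▸ gaussianPDFReal_pos 0 1 x one_ne_zero

lemma integrable_stdPdf : Integrable stdPdf :=
  stdPdf_eq_gaussianPDFReal ▸ integrable_gaussianPDFReal 0 1

lemma stdPdf_neg (x : ℝ) : stdPdf (-x) = stdPdf x := by
  simp [stdPdf]

lemma continuous_stdPdf : Continuous stdPdf := by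
  unfold stdPdf
  fun_prop

lemma hasDerivAt_stdPdf (x : ℝ) : HasDerivAt stdPdf (-x * stdPdf x) x := by
  have := (((hasDerivAt_pow 2 x).neg.div_const 2).exp).const_mul (Real.sqrt (2 * Real.pi))⁻¹
  refine this.congr_deriv ?_
  simp only [stdPdf, Pi.neg_apply]
  ring

lemma tendsto_stdPdf_atTop : Tendsto stdPdf atTop (𝓝 0) := by
  have h : Tendsto (fun x : ℝ => -x ^ 2 / 2) atTop atBot :=
    (tendsto_neg_atTop_atBot.comp (tendsto_pow_atTop two_ne_zero)).atBot_div_const two_pos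
  have := (Real.tendsto_exp_atBot.comp h).const_mul (Real.sqrt (2 * Real.pi))⁻¹
  rwa [mul_zero] at this

lemma Phi_eq_cdf : Phi = cdf (gaussianReal 0 1) := by
  ext x
  rw [cdf_eq_real, measureReal_def, gaussianReal_apply_eq_integral 0 one_ne_zero,
    ENNReal.toReal_ofReal (integral_nonneg (gaussianPDFReal_nonneg 0 1)),
    integral_Iic_eq_integral_Iio, ← stdPdf_eq_gaussianPDFReal]
  rfl

lemma Phi_eq_add_intervalIntegral (x : ℝ) : Phi x = Phi 0 + ∫ t in (0 : ℝ)..x, stdPdf t := by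
  have h := intervalIntegral.integral_Iic_sub_Iic (μ := volume)
    integrable_stdPdf.integrableOn integrable_stdPdf.integrableOn (a := 0) (b := x)
  rw [integral_Iic_eq_integral_Iio, integral_Iic_eq_integral_Iio] at h
  change ∫ t in Iio x, stdPdf t = (∫ t in Iio 0, stdPdf t) + _
  rw [← h]
  ring

lemma hasDerivAt_Phi (x : ℝ) : HasDerivAt Phi (stdPdf x) x := by
  rw [funext Phi_eq_add_intervalIntegral]
  exact (intervalIntegral.integral_hasDerivAt_right integrable_stdPdf.intervalIntegrable
    (continuous_stdPdf.stronglyMeasurableAtFilter _ _) continuous_stdPdf.continuousAt).const_add _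

lemma strictMono_Phi : StrictMono Phi :=
  strictMono_of_deriv_pos fun x => (hasDerivAt_Phi x).deriv ▸ stdPdf_pos x

lemma tendsto_Phi_atBot : Tendsto Phi atBot (𝓝 0) := Phi_eq_cdf ▸ tendsto_cdf_atBot _

lemma Phi_pos (x : ℝ) : 0 < Phi x :=
  (strictMono_Phi.monotone.le_of_tendsto tendsto_Phi_atBot (x - 1)).trans_lt
    (strictMono_Phi (sub_one_lt x))

lemma Phi_lt_one (x : ℝ) : Phi x < 1 :=
  (strictMono_Phi (lt_add_one x)).trans_le
    (strictMono_Phi.monotone.ge_of_tendsto (Phi_eq_cdf ▸ tendsto_cdf_atTop _) (x + 1))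

lemma hasDerivAt_Phi_neg (x : ℝ) : HasDerivAt (fun y => Phi (-y)) (-stdPdf x) x := by
  simpa [stdPdf_neg, Function.comp_def] using (hasDerivAt_Phi (-x)).comp x (hasDerivAt_neg x)

lemma tendsto_Phi_neg_atTop : Tendsto (fun x => Phi (-x)) atTop (𝓝 0) :=
  tendsto_Phi_atBot.comp tendsto_neg_atTop_atBot

/-- Mills' ratio, by l'Hôpital: numerator and denominator vanish at `∞` and the ratio of their
derivatives is `x² / (x² + 1)`. -/
lemma tendsto_Phi_neg_div_stdPdf_div_self :
    Tendsto (fun x => Phi (-x) / (stdPdf x / x)) atTop (𝓝 1) := by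
  have hg : ∀ x ∈ Ioi (0 : ℝ), HasDerivAt (fun y => stdPdf y / y)
      (-(stdPdf x * (x ^ 2 + 1)) / x ^ 2) x := fun x hx => by
    refine ((hasDerivAt_stdPdf x).div (hasDerivAt_id x) (ne_of_gt hx)).congr_deriv ?_
    simp only [id]
    ring
  have hratio : Tendsto (fun x : ℝ => 1 - (x ^ 2 + 1)⁻¹) atTop (𝓝 1) := by
    have h : Tendsto (fun x : ℝ => x ^ 2 + 1) atTop atTop :=
      tendsto_atTop_add_const_right _ 1 (tendsto_pow_atTop two_ne_zero)
    simpa using tendsto_const_nhds.sub (tendsto_inv_atTop_zero.comp h)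
  refine HasDerivAt.lhopital_zero_atTop_on_Ioi (a := 0) (fun x _ => hasDerivAt_Phi_neg x) hg
    (fun x hx => div_ne_zero (neg_ne_zero.2 (mul_pos (stdPdf_pos x) (by positivity)).ne')
      (pow_ne_zero 2 (ne_of_gt hx)))
    tendsto_Phi_neg_atTop ?_ (hratio.congr' ?_)
  · simpa [div_eq_mul_inv] using tendsto_stdPdf_atTop.mul tendsto_inv_atTop_zero
  · filter_upwards [eventually_gt_atTop 0] with x hx
    have := stdPdf_pos x
    field_simp
    ring

lemma hasDerivAt_logit {p : ℝ} (h0 : p ≠ 0) (h1 : p ≠ 1) :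
    HasDerivAt logit (p⁻¹ + (1 - p)⁻¹) p := by
  have h := (Real.hasDerivAt_log h0).sub
    (((hasDerivAt_id' p).const_sub 1).log (sub_ne_zero.2 h1.symm))
  refine h.congr_deriv ?_
  ring

lemma hasDerivAt_logit_Phi_neg (x : ℝ) :
    HasDerivAt (fun y => logit (Phi (-y)))
      (-(stdPdf x * ((Phi (-x))⁻¹ + (1 - Phi (-x))⁻¹))) x := by
  have h := hasDerivAt_logit (Phi_pos (-x)).ne' (Phi_lt_one (-x)).ne
  simpa [Function.comp_def, mul_comm] using h.comp x (hasDerivAt_Phi_neg x)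

lemma tendsto_deriv_logit_Phi_neg_div_self :
    Tendsto (fun x => deriv (fun y => logit (Phi (-y))) x / x) atTop (𝓝 (-1)) := by
  have hmills : Tendsto (fun x => stdPdf x / (x * Phi (-x))) atTop (𝓝 1) := by
    simpa [div_div_eq_mul_div, mul_comm] using
      tendsto_Phi_neg_div_stdPdf_div_self.inv₀ one_ne_zero
  have hrest : Tendsto (fun x => stdPdf x / x * (1 - Phi (-x))⁻¹) atTop (𝓝 0) := by
    simpa [div_eq_mul_inv] using (tendsto_stdPdf_atTop.mul tendsto_inv_atTop_zero).mul
      ((tendsto_const_nhds.sub tendsto_Phi_neg_atTop).inv₀ (by norm_num : (1 : ℝ) - 0 ≠ 0))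
  have h := (hmills.add hrest).neg
  rw [add_zero] at h
  refine h.congr' ?_
  filter_upwards [eventually_gt_atTop 0] with x hx
  have := Phi_pos (-x)
  rw [(hasDerivAt_logit_Phi_neg x).deriv]
  field_simp

section SqrtAffine

variable {a b : ℝ}

lemma tendsto_abs_mul_sqrt_add_atTop (ha : a ≠ 0) :
    Tendsto (fun n => |a * √n + b|) atTop atTop := by
  have h : Tendsto (fun n => |a| * √n - |b|) atTop atTop :=
    tendsto_atTop_add_const_right _ _ (Real.tendsto_sqrt_atTop.const_mul_atTop (abs_pos.2 ha))
  refine tendsto_atTop_mono (fun n => ?_) h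
  calc |a| * √n - |b| = |a * √n| - |b| := by rw [abs_mul, abs_of_nonneg (Real.sqrt_nonneg n)]
    _ ≤ |a * √n + b| := abs_sub_abs_le_abs_add _ _

lemma tendsto_mul_sqrt_add_mul_div_sqrt :
    Tendsto (fun n => (a * √n + b) * (a / (2 * √n))) atTop (𝓝 (a ^ 2 / 2)) := by
  have h : Tendsto (fun n => a ^ 2 / 2 + a * b / 2 * (√n)⁻¹) atTop (𝓝 (a ^ 2 / 2)) := by
    simpa using tendsto_const_nhds.add
      ((tendsto_inv_atTop_zero.comp Real.tendsto_sqrt_atTop).const_mul (a * b / 2))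
  refine h.congr' ?_
  filter_upwards [eventually_gt_atTop 0] with n hn
  have := Real.sqrt_pos.2 hn
  field_simp

lemma mul_sqrt_add_ne_zero {n : ℝ} (ha : a ≠ 0) (hn : (b / a) ^ 2 < n) : a * √n + b ≠ 0 := by
  have h : |b / a| < √n := Real.lt_sqrt (abs_nonneg _) |>.2 (by rwa [sq_abs])
  rw [abs_div, div_lt_iff₀ (abs_pos.2 ha)] at h
  intro h0
  have : |a * √n| = |b| := by rw [eq_neg_of_add_eq_zero_left h0, abs_neg]
  rw [abs_mul, abs_of_nonneg (Real.sqrt_nonneg n)] at this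
  linarith

lemma exists_tendsto_deriv_comp_abs_mul_sqrt_add {F : ℝ → ℝ} {L : ℝ} (ha : a ≠ 0)
    (hF : ∀ x > 0, DifferentiableAt ℝ F x)
    (hF' : Tendsto (fun x => deriv F x / x) atTop (𝓝 L)) :
    ∃ N, DifferentiableOn ℝ (fun n => F |a * √n + b|) (Ioi N) ∧
      Tendsto (deriv (fun n => F |a * √n + b|)) atTop (𝓝 (L * (a ^ 2 / 2))) := by
  have hderiv : ∀ n > (b / a) ^ 2, HasDerivAt (fun n => F |a * √n + b|)
      (deriv F |a * √n + b| * (SignType.sign (a * √n + b) * (a * (1 / (2 * √n))))) n :=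
      fun n hn => by
    have hg0 : a * √n + b ≠ 0 := mul_sqrt_add_ne_zero ha hn
    have hg : HasDerivAt (fun n => a * √n + b) (a * (1 / (2 * √n))) n :=
      ((Real.hasDerivAt_sqrt ((sq_nonneg _).trans_lt hn).ne').const_mul a).add_const b
    have habs := (hasDerivAt_abs hg0).comp n hg
    exact (hF _ (abs_pos.2 hg0)).hasDerivAt.comp n habs
  refine ⟨(b / a) ^ 2, fun n hn => (hderiv n hn).differentiableAt.differentiableWithinAt, ?_⟩
  refine ((hF'.comp (tendsto_abs_mul_sqrt_add_atTop (b := b) ha)).mul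
    (tendsto_mul_sqrt_add_mul_div_sqrt (b := b))).congr' ?_
  filter_upwards [eventually_gt_atTop ((b / a) ^ 2)] with n hn
  have hg0 : a * √n + b ≠ 0 := mul_sqrt_add_ne_zero ha hn
  rw [(hderiv n hn).deriv, Function.comp_apply]
  generalize a * √n + b = y at hg0 ⊢
  have := abs_pos.2 hg0
  field_simp
  rw [mul_assoc _ |y|, abs_mul_sign]

end SqrtAffine

theorem stmt5 (a b : ℝ) (ha : a ≠ 0) :
    ∃ N : ℝ,
      DifferentiableOn ℝ (fun n : ℝ => logit (Phi (-|a * Real.sqrt n + b|))) (Set.Ioi N) ∧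
      Filter.Tendsto (deriv (fun n : ℝ => logit (Phi (-|a * Real.sqrt n + b|))))
        Filter.atTop (nhds (-a ^ 2 / 2)) := by
  have h := exists_tendsto_deriv_comp_abs_mul_sqrt_add (b := b) ha
    (fun x _ => (hasDerivAt_logit_Phi_neg x).differentiableAt)
    tendsto_deriv_logit_Phi_neg_div_self
  rwa [neg_one_mul, ← neg_div] at h
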